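/- arXiv:2312.12407 — 2 statements merged into one kernel-verified Lean document; each statement's English description precedes it below -/
import Mathlib

section
/- Comparison of linearized Monge–Ampère operators (Lemma 3.x, 'comparing Ψ̂' and Ψ''): for q, q̂ ∈ C^{2+β}_+(𝕋^d) with C^{2+β} norms at most λ, there exists a constant C > 0 depending only on d, β, λ such that for every u ∈ C^{2+β}_0(𝕋^d), ‖ det(∇²φ₀)·[ (q̂−q)(∇φ₀)·⟨(∇²φ₀)^{-1}, ∇²u⟩_F + ⟨∇u, (∇q̂−∇q)(∇φ₀)⟩ ] ‖_{C^{β}} ≤ C · ( ‖u‖_{C^{2+β}} · ‖q̂−q‖_{C^{β}} + ‖u‖_{C^{1+β}} · ‖q̂−q‖_{C^{1+β}} ). -/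
open MeasureTheory Real
open scoped ENNReal NNReal RealInnerProductSpace

noncomputable section

abbrev Ed (d : ℕ) : Type := EuclideanSpace ℝ (Fin d)

def intVec {d : ℕ} (k : Fin d → ℤ) : Ed d := WithLp.toLp 2 (fun i => (k i : ℝ))

def ZdPeriodic {d : ℕ} (f : Ed d → ℝ) : Prop :=
  ∀ (x : Ed d) (k : Fin d → ℤ), f (x + intVec k) = f x

def supDeriv {d : ℕ} (j : ℕ) (f : Ed d → ℝ) : ℝ≥0∞ :=
  ⨆ x : Ed d, (‖iteratedFDeriv ℝ j f x‖₊ : ℝ≥0∞)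

def holderSemi {d : ℕ} (k : ℕ) (ε : ℝ) (f : Ed d → ℝ) : ℝ≥0∞ :=
  ⨆ (x : Ed d) (y : Ed d) (_ : x ≠ y),
    (‖iteratedFDeriv ℝ k f x - iteratedFDeriv ℝ k f y‖₊ : ℝ≥0∞) / (‖x - y‖₊ : ℝ≥0∞) ^ ε

def holderNorm {d : ℕ} (α : ℝ) (f : Ed d → ℝ) : ℝ≥0∞ :=
  (∑ j ∈ Finset.range (⌊α⌋₊ + 1), supDeriv j f) +
  (if α = (⌊α⌋₊ : ℝ) then 0 else holderSemi ⌊α⌋₊ (α - ⌊α⌋₊) f)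

def hess {d : ℕ} (f : Ed d → ℝ) (x : Ed d) : Matrix (Fin d) (Fin d) ℝ :=
  fun i j => iteratedFDeriv ℝ 2 f x ![EuclideanSpace.single i 1, EuclideanSpace.single j 1]

def pdiv {d : ℕ} (F : Ed d → Fin d → ℝ) (x : Ed d) : ℝ :=
  ∑ i, fderiv ℝ (fun y => F y i) x (EuclideanSpace.single i 1)

/-- Frobenius inner product `⟨M,N⟩_F = tr(Mᵀ N)`. -/
def frobInner {d : ℕ} (M N : Matrix (Fin d) (Fin d) ℝ) : ℝ := (M.transpose * N).trace

def unitCube (d : ℕ) : Set (Ed d) := {x | ∀ i, x i ∈ Set.Icc (0 : ℝ) 1}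

def hessLB {d : ℕ} (f : Ed d → ℝ) (c : ℝ) : Prop :=
  ∀ (x v : Ed d), c * ‖v‖ ^ 2 ≤ ∑ i, ∑ j, v i * hess f x i j * v j


/-!
For `0 < β < 1` the norm `‖f‖_{C^β} = sup |f| + [f]_β` is subadditive and submultiplicative,
grows at most by the factor `K ≥ 1` under composition with a `K`-Lipschitz map, and controls
`1 / f` when `f` is bounded below. The entries of `∇²φ₀ = I + ∇²(φ₀ - ‖·‖² / 2)` are bounded with
bounded derivative, hence `C^β`-bounded; uniform convexity gives `det ∇²φ₀ ≥ λ^{-d}`, so Cramer's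
rule bounds the entries of `(∇²φ₀)⁻¹` in `C^β`; and `∇φ₀` is `(λ + 1)`-Lipschitz. Expanding the
Frobenius and Euclidean inner products into sums of products gives the estimate.
-/

section HolderNorm

variable {X Y E R : Type*} [NormedAddCommGroup E]

def supENorm (f : X → E) : ℝ≥0∞ := ⨆ x, ‖f x‖ₑ

lemma enorm_le_supENorm (f : X → E) (x : X) : ‖f x‖ₑ ≤ supENorm f :=
  le_iSup (fun x => ‖f x‖ₑ) x

lemma supENorm_le {f : X → E} {M : ℝ≥0∞} (h : ∀ x, ‖f x‖ₑ ≤ M) : supENorm f ≤ M :=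
  iSup_le h

variable [MetricSpace X] [MetricSpace Y]

def holderSeminorm (β : ℝ) (f : X → E) : ℝ≥0∞ :=
  ⨆ (x) (y) (_ : x ≠ y), ‖f x - f y‖ₑ / edist x y ^ β

def supHolderNorm (β : ℝ) (f : X → E) : ℝ≥0∞ := supENorm f + holderSeminorm β f

variable {β : ℝ}

lemma edist_rpow_ne_zero {x y : X} (h : x ≠ y) : edist x y ^ β ≠ 0 := by
  simp [ENNReal.rpow_eq_zero_iff, h, edist_ne_top]

lemma edist_rpow_ne_top {x y : X} (h : x ≠ y) : edist x y ^ β ≠ ⊤ := by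
  simp [ENNReal.rpow_eq_top_iff, h, edist_ne_top]

lemma holderSeminorm_le {f : X → E} {M : ℝ≥0∞}
    (h : ∀ x y, x ≠ y → ‖f x - f y‖ₑ ≤ M * edist x y ^ β) : holderSeminorm β f ≤ M :=
  iSup₂_le fun x y => iSup_le fun hxy =>
    (ENNReal.div_le_iff (edist_rpow_ne_zero hxy) (edist_rpow_ne_top hxy)).2 (h x y hxy)

lemma enorm_sub_le_holderSeminorm (f : X → E) (x y : X) :
    ‖f x - f y‖ₑ ≤ holderSeminorm β f * edist x y ^ β := by
  rcases eq_or_ne x y with rfl | hxy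
  · simp
  · refine (ENNReal.div_le_iff (edist_rpow_ne_zero hxy) (edist_rpow_ne_top hxy)).1 ?_
    exact le_iSup₂_of_le x y (le_iSup_of_le hxy le_rfl)

lemma supHolderNorm_le_of_enorm_le {F : Type*} [NormedAddCommGroup F] {f : X → E} {g : X → F}
    (h₀ : ∀ x, ‖g x‖ₑ ≤ ‖f x‖ₑ) (h₁ : ∀ x y, ‖g x - g y‖ₑ ≤ ‖f x - f y‖ₑ) :
    supHolderNorm β g ≤ supHolderNorm β f :=
  add_le_add (supENorm_le fun x => (h₀ x).trans (enorm_le_supENorm f x))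
    (holderSeminorm_le fun x y _ => (h₁ x y).trans (enorm_sub_le_holderSeminorm f x y))

lemma supHolderNorm_add (f g : X → E) :
    supHolderNorm β (fun x => f x + g x) ≤ supHolderNorm β f + supHolderNorm β g := by
  have hsup : supENorm (fun x => f x + g x) ≤ supENorm f + supENorm g :=
    supENorm_le fun x =>
      (enorm_add_le (f x) (g x)).trans (add_le_add (enorm_le_supENorm f x) (enorm_le_supENorm g x))
  have hsemi : holderSeminorm β (fun x => f x + g x) ≤ holderSeminorm β f + holderSeminorm β g :=
    holderSeminorm_le fun x y _ => calc
      ‖f x + g x - (f y + g y)‖ₑ = ‖(f x - f y) + (g x - g y)‖ₑ := by rw [add_sub_add_comm]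
      _ ≤ ‖f x - f y‖ₑ + ‖g x - g y‖ₑ := enorm_add_le _ _
      _ ≤ _ := add_le_add (enorm_sub_le_holderSeminorm f x y) (enorm_sub_le_holderSeminorm g x y)
      _ = _ := (add_mul _ _ _).symm
  calc supHolderNorm β (fun x => f x + g x)
      ≤ (supENorm f + supENorm g) + (holderSeminorm β f + holderSeminorm β g) :=
        add_le_add hsup hsemi
    _ = _ := add_add_add_comm _ _ _ _

lemma supHolderNorm_const_le (c : E) : supHolderNorm β (fun _ : X => c) ≤ ‖c‖ₑ := by
  have hsemi : holderSeminorm β (fun _ : X => c) ≤ 0 := holderSeminorm_le fun x y _ => by simp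
  simpa [supHolderNorm] using add_le_add (supENorm_le fun (_ : X) => le_rfl) hsemi

lemma supHolderNorm_sum {ι : Type*} (s : Finset ι) (f : ι → X → E) :
    supHolderNorm β (fun x => ∑ i ∈ s, f i x) ≤ ∑ i ∈ s, supHolderNorm β (f i) := by
  classical
  induction s using Finset.induction_on with
  | empty => simpa using supHolderNorm_const_le (β := β) (X := X) (0 : E)
  | insert a s ha ih =>
    simp only [Finset.sum_insert ha]
    exact (supHolderNorm_add _ _).trans (add_le_add le_rfl ih)

lemma enorm_mul_le_mul [NormedRing R] (a b : R) : ‖a * b‖ₑ ≤ ‖a‖ₑ * ‖b‖ₑ := by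
  simpa [enorm] using ENNReal.coe_le_coe.2 (nnnorm_mul_le a b)

lemma supHolderNorm_mul [NormedRing R] (f g : X → R) :
    supHolderNorm β (fun x => f x * g x) ≤ supHolderNorm β f * supHolderNorm β g := by
  have hsup : supENorm (fun x => f x * g x) ≤ supENorm f * supENorm g :=
    supENorm_le fun x =>
      (enorm_mul_le_mul _ _).trans (mul_le_mul' (enorm_le_supENorm f x) (enorm_le_supENorm g x))
  have hsemi : holderSeminorm β (fun x => f x * g x) ≤
      supENorm f * holderSeminorm β g + holderSeminorm β f * supENorm g :=
    holderSeminorm_le fun x y _ => calc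
      ‖f x * g x - f y * g y‖ₑ = ‖f x * (g x - g y) + (f x - f y) * g y‖ₑ := by
        rw [mul_sub, sub_mul, sub_add_sub_cancel]
      _ ≤ ‖f x‖ₑ * ‖g x - g y‖ₑ + ‖f x - f y‖ₑ * ‖g y‖ₑ :=
        (enorm_add_le (f x * (g x - g y)) _).trans
          (add_le_add (enorm_mul_le_mul _ _) (enorm_mul_le_mul _ _))
      _ ≤ supENorm f * (holderSeminorm β g * edist x y ^ β) +
          holderSeminorm β f * edist x y ^ β * supENorm g :=
        add_le_add (mul_le_mul' (enorm_le_supENorm f x) (enorm_sub_le_holderSeminorm g x y))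
          (mul_le_mul' (enorm_sub_le_holderSeminorm f x y) (enorm_le_supENorm g y))
      _ = _ := by ring
  calc supHolderNorm β (fun x => f x * g x)
      ≤ supENorm f * supENorm g + (supENorm f * holderSeminorm β g +
          holderSeminorm β f * supENorm g) := add_le_add hsup hsemi
    _ ≤ supENorm f * supENorm g + (supENorm f * holderSeminorm β g +
          holderSeminorm β f * supENorm g) + holderSeminorm β f * holderSeminorm β g := le_self_add
    _ = supHolderNorm β f * supHolderNorm β g := by simp only [supHolderNorm]; ring

lemma supHolderNorm_prod [NormedCommRing R] [NormOneClass R] {ι : Type*} (s : Finset ι)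
    (f : ι → X → R) :
    supHolderNorm β (fun x => ∏ i ∈ s, f i x) ≤ ∏ i ∈ s, supHolderNorm β (f i) := by
  classical
  induction s using Finset.induction_on with
  | empty => simpa using supHolderNorm_const_le (β := β) (X := X) (1 : R)
  | insert a s ha ih =>
    simp only [Finset.prod_insert ha]
    exact (supHolderNorm_mul _ _).trans (mul_le_mul' le_rfl ih)

lemma supHolderNorm_comp_le {f : Y → E} {Φ : X → Y} {K : ℝ≥0} (hβ₀ : 0 ≤ β) (hβ₁ : β ≤ 1)
    (hK : 1 ≤ K) (hΦ : LipschitzWith K Φ) :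
    supHolderNorm β (fun x => f (Φ x)) ≤ K * supHolderNorm β f := by
  have hKβ : (K : ℝ≥0∞) ^ β ≤ K := by
    simpa using ENNReal.rpow_le_rpow_of_exponent_le (by exact_mod_cast hK : (1 : ℝ≥0∞) ≤ K) hβ₁
  have hsemi : holderSeminorm β (fun x => f (Φ x)) ≤ K * holderSeminorm β f :=
    holderSeminorm_le fun x y _ => calc
      ‖f (Φ x) - f (Φ y)‖ₑ ≤ holderSeminorm β f * edist (Φ x) (Φ y) ^ β :=
        enorm_sub_le_holderSeminorm f _ _
      _ ≤ holderSeminorm β f * (K * edist x y) ^ β := by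
        gcongr; exact hΦ.edist_le_mul x y
      _ = (K : ℝ≥0∞) ^ β * holderSeminorm β f * edist x y ^ β := by
        rw [ENNReal.mul_rpow_of_nonneg _ _ hβ₀]; ring
      _ ≤ K * holderSeminorm β f * edist x y ^ β := by gcongr
  calc supHolderNorm β (fun x => f (Φ x)) ≤ supENorm f + K * holderSeminorm β f :=
        add_le_add (supENorm_le fun x => enorm_le_supENorm f (Φ x)) hsemi
    _ ≤ K * supENorm f + K * holderSeminorm β f := by
        gcongr; exact le_mul_of_one_le_left' (by exact_mod_cast hK)
    _ = K * supHolderNorm β f := (mul_add _ _ _).symm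

end HolderNorm

section HolderNormBounds

variable {X E : Type*} [MetricSpace X] [NormedAddCommGroup E] {β : ℝ}

lemma supHolderNorm_le_of_lipschitzWith {f : X → E} {a : ℝ≥0} (hβ₀ : 0 ≤ β) (hβ₁ : β ≤ 1)
    (hb : ∀ x, ‖f x‖ₑ ≤ a) (hf : LipschitzWith a f) : supHolderNorm β f ≤ 3 * a := by
  have hsemi : holderSeminorm β f ≤ 2 * a := holderSeminorm_le fun x y _ => by
    rcases le_total (edist x y) 1 with h | h
    · calc ‖f x - f y‖ₑ = edist (f x) (f y) := (edist_eq_enorm_sub _ _).symm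
        _ ≤ a * edist x y := hf.edist_le_mul x y
        _ ≤ a * edist x y ^ β := by
          gcongr; simpa using ENNReal.rpow_le_rpow_of_exponent_ge h hβ₁
        _ ≤ 2 * a * edist x y ^ β := by gcongr; exact le_mul_of_one_le_left' one_le_two
    · calc ‖f x - f y‖ₑ ≤ ‖f x‖ₑ + ‖f y‖ₑ := enorm_sub_le
        _ ≤ a + a := add_le_add (hb x) (hb y)
        _ = 2 * a * 1 := by ring
        _ ≤ 2 * a * edist x y ^ β := by gcongr; simpa using ENNReal.rpow_le_rpow h hβ₀
  calc supHolderNorm β f ≤ a + 2 * a := add_le_add (supENorm_le hb) hsemi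
    _ = 3 * a := by ring

lemma abs_inv_sub_inv_le {a b c : ℝ} (hc : 0 < c) (ha : c ≤ a) (hb : c ≤ b) :
    |a⁻¹ - b⁻¹| ≤ c⁻¹ ^ 2 * |a - b| := by
  have hab : c ^ 2 ≤ a * b := by nlinarith
  rw [inv_sub_inv (hc.trans_le ha).ne' (hc.trans_le hb).ne', abs_div, abs_sub_comm,
    abs_of_pos (by nlinarith : 0 < a * b), inv_pow, ← div_eq_inv_mul]
  exact div_le_div_of_nonneg_left (abs_nonneg _) (by positivity) hab

lemma supHolderNorm_inv_le {f : X → ℝ} {c : ℝ} (hc : 0 < c) (hf : ∀ x, c ≤ f x) :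
    supHolderNorm β (fun x => (f x)⁻¹) ≤
      ENNReal.ofReal c⁻¹ + ENNReal.ofReal (c⁻¹ ^ 2) * holderSeminorm β f := by
  refine add_le_add (supENorm_le fun x => ?_) (holderSeminorm_le fun x y _ => ?_)
  · rw [Real.enorm_eq_ofReal_abs, abs_inv, abs_of_pos (hc.trans_le (hf x))]
    exact ENNReal.ofReal_le_ofReal (inv_anti₀ hc (hf x))
  · calc ‖(f x)⁻¹ - (f y)⁻¹‖ₑ ≤ ENNReal.ofReal (c⁻¹ ^ 2 * |f x - f y|) := by
          rw [Real.enorm_eq_ofReal_abs]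
          exact ENNReal.ofReal_le_ofReal (abs_inv_sub_inv_le hc (hf x) (hf y))
      _ = ENNReal.ofReal (c⁻¹ ^ 2) * ‖f x - f y‖ₑ := by
          rw [ENNReal.ofReal_mul (by positivity), Real.enorm_eq_ofReal_abs]
      _ ≤ ENNReal.ofReal (c⁻¹ ^ 2) * (holderSeminorm β f * edist x y ^ β) := by
          gcongr; exact enorm_sub_le_holderSeminorm f x y
      _ = _ := (mul_assoc _ _ _).symm

lemma supHolderNorm_apply_le {ι F : Type*} [Fintype ι] [NormedAddCommGroup F] [NormedSpace ℝ F]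
    [NormedSpace ℝ E] {T : X → ContinuousMultilinearMap ℝ (fun _ : ι => F) E} (m : ι → F)
    (hm : ∀ i, ‖m i‖ ≤ 1) : supHolderNorm β (fun x => T x m) ≤ supHolderNorm β T := by
  have key (S : ContinuousMultilinearMap ℝ (fun _ : ι => F) E) : ‖S m‖ₑ ≤ ‖S‖ₑ :=
    enorm_le_iff_norm_le.2 (by simpa using S.le_opNorm_mul_prod_of_le hm)
  exact supHolderNorm_le_of_enorm_le (fun x => key (T x)) (fun x y => key (T x - T y))

variable {n : Type*} [Fintype n]

lemma supHolderNorm_inner_le {F G : X → EuclideanSpace ℝ n} {a b : ℝ≥0∞}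
    (hF : ∀ i, supHolderNorm β (fun x => F x i) ≤ a)
    (hG : ∀ i, supHolderNorm β (fun x => G x i) ≤ b) :
    supHolderNorm β (fun x => ⟪F x, G x⟫) ≤ Fintype.card n * (a * b) := by
  have hsum (x : X) : ⟪F x, G x⟫ = ∑ i, F x i * G x i := by
    simp [PiLp.inner_apply, mul_comm]
  simp_rw [hsum]
  calc _ ≤ ∑ i, supHolderNorm β (fun x => F x i * G x i) := supHolderNorm_sum _ _
    _ ≤ ∑ _i : n, a * b :=
      Finset.sum_le_sum fun i _ => (supHolderNorm_mul _ _).trans (mul_le_mul' (hF i) (hG i))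
    _ = _ := by simp

lemma supHolderNorm_frobInner_le {d : ℕ} {M N : X → Matrix (Fin d) (Fin d) ℝ} {a b : ℝ≥0∞}
    (hM : ∀ i j, supHolderNorm β (fun x => M x i j) ≤ a)
    (hN : ∀ i j, supHolderNorm β (fun x => N x i j) ≤ b) :
    supHolderNorm β (fun x => frobInner (M x) (N x)) ≤ d * (d * (a * b)) := by
  have hsum (x : X) : frobInner (M x) (N x) = ∑ i, ∑ j, M x j i * N x j i := by
    simp [frobInner, Matrix.trace, Matrix.mul_apply]
  simp_rw [hsum]
  calc _ ≤ ∑ i, supHolderNorm β (fun x => ∑ j, M x j i * N x j i) := supHolderNorm_sum _ _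
    _ ≤ ∑ i : Fin d, ∑ j : Fin d, supHolderNorm β (fun x => M x j i * N x j i) :=
      Finset.sum_le_sum fun i _ => supHolderNorm_sum _ _
    _ ≤ ∑ _i : Fin d, ∑ _j : Fin d, a * b := Finset.sum_le_sum fun i _ =>
      Finset.sum_le_sum fun j _ => (supHolderNorm_mul _ _).trans (mul_le_mul' (hM j i) (hN j i))
    _ = _ := by simp

def detBound (n : ℕ) (K : ℝ≥0∞) : ℝ≥0∞ := n.factorial * K ^ n

-- `A⁻¹ = (det A)⁻¹ • adjugate A`, and the entries of `adjugate A` are determinants.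
def invBound (n : ℕ) (K : ℝ≥0∞) (c : ℝ) : ℝ≥0∞ :=
  (ENNReal.ofReal c⁻¹ + ENNReal.ofReal (c⁻¹ ^ 2) * detBound n K) * detBound n K

variable [DecidableEq n] {A : X → Matrix n n ℝ} {K : ℝ≥0∞}

lemma enorm_units_int_smul (s : ℤˣ) (a : E) : ‖s • a‖ₑ = ‖a‖ₑ := by
  rcases Int.units_eq_one_or s with rfl | rfl <;> simp

lemma supHolderNorm_det_le (hA : ∀ i j, supHolderNorm β (fun x => A x i j) ≤ K) :
    supHolderNorm β (fun x => (A x).det) ≤ detBound (Fintype.card n) K := by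
  simp_rw [Matrix.det_apply]
  have hterm (σ : Equiv.Perm n) :
      supHolderNorm β (fun x => Equiv.Perm.sign σ • ∏ i, A x (σ i) i) ≤ K ^ Fintype.card n :=
    calc _ ≤ supHolderNorm β (fun x => ∏ i, A x (σ i) i) :=
          supHolderNorm_le_of_enorm_le (fun x => (enorm_units_int_smul _ _).le)
            (fun x y => by rw [← smul_sub, enorm_units_int_smul])
      _ ≤ ∏ i, supHolderNorm β (fun x => A x (σ i) i) := supHolderNorm_prod _ _
      _ ≤ ∏ _i : n, K := Finset.prod_le_prod' fun i _ => hA _ _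
      _ = K ^ Fintype.card n := by simp
  calc _ ≤ ∑ σ : Equiv.Perm n, supHolderNorm β (fun x => Equiv.Perm.sign σ • ∏ i, A x (σ i) i) :=
        supHolderNorm_sum _ _
    _ ≤ ∑ _σ : Equiv.Perm n, K ^ Fintype.card n := Finset.sum_le_sum fun σ _ => hterm σ
    _ = _ := by simp [detBound, Fintype.card_perm]

lemma supHolderNorm_adjugate_le (hK : 1 ≤ K)
    (hA : ∀ i j, supHolderNorm β (fun x => A x i j) ≤ K) (i j : n) :
    supHolderNorm β (fun x => (A x).adjugate i j) ≤ detBound (Fintype.card n) K := by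
  simp_rw [Matrix.adjugate_apply]
  refine supHolderNorm_det_le fun a b => ?_
  by_cases hab : a = j
  · simp only [Matrix.updateRow_apply, if_pos hab]
    refine (supHolderNorm_const_le _).trans (le_trans ?_ hK)
    rcases eq_or_ne b i with rfl | hbi <;> simp [*]
  · simpa only [Matrix.updateRow_apply, if_neg hab] using hA a b

lemma supHolderNorm_inv_apply_le (hK : 1 ≤ K)
    (hA : ∀ i j, supHolderNorm β (fun x => A x i j) ≤ K) {c : ℝ} (hc : 0 < c)
    (hdet : ∀ x, c ≤ (A x).det) (i j : n) :
    supHolderNorm β (fun x => (A x)⁻¹ i j) ≤ invBound (Fintype.card n) K c := by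
  have hinv (x : X) : (A x)⁻¹ i j = ((A x).det)⁻¹ * (A x).adjugate i j := by
    rw [Matrix.inv_def, Matrix.smul_apply, smul_eq_mul, Ring.inverse_eq_inv]
  simp_rw [hinv]
  refine (supHolderNorm_mul _ _).trans (mul_le_mul' ?_ (supHolderNorm_adjugate_le hK hA i j))
  refine (supHolderNorm_inv_le hc hdet).trans ?_
  gcongr
  exact le_add_self.trans (supHolderNorm_det_le hA)

end HolderNormBounds

section HolderNormOfDerivatives

variable {d : ℕ} {β : ℝ}

lemma supHolderNorm_linearIsometryEquiv_comp {X E F : Type*} [MetricSpace X]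
    [NormedAddCommGroup E] [NormedAddCommGroup F] [NormedSpace ℝ E] [NormedSpace ℝ F]
    (L : E ≃ₗᵢ[ℝ] F) (f : X → E) : supHolderNorm β (fun x => L (f x)) = supHolderNorm β f := by
  refine le_antisymm (supHolderNorm_le_of_enorm_le (fun x => ?_) (fun x y => ?_))
    (supHolderNorm_le_of_enorm_le (fun x => ?_) (fun x y => ?_)) <;>
  simp [← map_sub]

lemma holderNorm_natCast_add (hβ₀ : 0 < β) (hβ₁ : β < 1) (k : ℕ) (f : Ed d → ℝ) :
    holderNorm (k + β) f = ∑ j ∈ Finset.range (k + 1), supENorm (iteratedFDeriv ℝ j f) +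
      holderSeminorm β (iteratedFDeriv ℝ k f) := by
  have hfloor : ⌊(k + β : ℝ)⌋₊ = k :=
    (Nat.floor_eq_iff (by positivity)).2 ⟨by linarith, by linarith⟩
  rw [holderNorm, hfloor, if_neg (by linarith), add_sub_cancel_left]
  simp only [holderSemi, holderSeminorm, supDeriv, supENorm, edist_eq_enorm_sub]
  rfl

lemma supENorm_iteratedFDeriv_le_holderNorm (hβ₀ : 0 < β) (hβ₁ : β < 1) {j k : ℕ} (hjk : j ≤ k)
    (f : Ed d → ℝ) : supENorm (iteratedFDeriv ℝ j f) ≤ holderNorm (k + β) f := by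
  rw [holderNorm_natCast_add hβ₀ hβ₁]
  exact (Finset.single_le_sum (f := fun j => supENorm (iteratedFDeriv ℝ j f))
    (fun _ _ => zero_le) (Finset.mem_range.2 (Nat.lt_succ_of_le hjk))).trans le_self_add

lemma supHolderNorm_iteratedFDeriv_le_holderNorm (hβ₀ : 0 < β) (hβ₁ : β < 1) (k : ℕ)
    (f : Ed d → ℝ) : supHolderNorm β (iteratedFDeriv ℝ k f) ≤ holderNorm (k + β) f := by
  rw [holderNorm_natCast_add hβ₀ hβ₁, Finset.sum_range_succ, add_assoc]
  exact le_add_self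

lemma holderNorm_eq_supHolderNorm (hβ₀ : 0 < β) (hβ₁ : β < 1) (f : Ed d → ℝ) :
    holderNorm β f = supHolderNorm β f := by
  have h := holderNorm_natCast_add hβ₀ hβ₁ 0 f
  rw [Nat.cast_zero, zero_add, Finset.sum_range_one] at h
  rw [h, ← supHolderNorm_linearIsometryEquiv_comp (continuousMultilinearCurryFin0 ℝ (Ed d) ℝ).symm]
  rfl

lemma supHolderNorm_hess_apply_le (f : Ed d → ℝ) (i j : Fin d) :
    supHolderNorm β (fun x => hess f x i j) ≤ supHolderNorm β (iteratedFDeriv ℝ 2 f) :=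
  supHolderNorm_apply_le _ fun k => by fin_cases k <;> simp

lemma gradient_apply_eq_iteratedFDeriv (f : Ed d → ℝ) (x : Ed d) (i : Fin d) :
    gradient f x i = iteratedFDeriv ℝ 1 f x ![EuclideanSpace.single i 1] := by
  simp [← inner_gradient_left, EuclideanSpace.inner_single_right]

lemma supHolderNorm_gradient_apply_le (f : Ed d → ℝ) (i : Fin d) :
    supHolderNorm β (fun x => gradient f x i) ≤ supHolderNorm β (iteratedFDeriv ℝ 1 f) := by
  simp_rw [gradient_apply_eq_iteratedFDeriv]
  exact supHolderNorm_apply_le _ fun k => by fin_cases k; simp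

end HolderNormOfDerivatives

lemma lipschitzWith_iteratedFDeriv_of_enorm_le {E F : Type*} [NormedAddCommGroup E]
    [NormedSpace ℝ E] [NormedAddCommGroup F] [NormedSpace ℝ F] {f : E → F} {n : WithTop ℕ∞}
    {k : ℕ} (hf : ContDiff ℝ n f) (hk : k < n) {a : ℝ≥0}
    (h : ∀ x, ‖iteratedFDeriv ℝ (k + 1) f x‖ₑ ≤ a) :
    LipschitzWith a (iteratedFDeriv ℝ k f) :=
  lipschitzWith_of_nnnorm_fderiv_le (hf.differentiable_iteratedFDeriv hk) fun x => by
    simpa [← NNReal.coe_le_coe, norm_fderiv_iteratedFDeriv] using h x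

section Calculus

variable {F : Type*} [NormedAddCommGroup F] [InnerProductSpace ℝ F]

lemma hasFDerivAt_half_sq_norm (x : F) :
    HasFDerivAt (fun y : F => ‖y‖ ^ 2 / 2) (innerSL ℝ x) x := by
  have hfun : (fun y : F => ‖y‖ ^ 2 / 2) = (2⁻¹ : ℝ) • fun y => ‖y‖ ^ 2 := by
    ext y; simp [div_eq_inv_mul]
  rw [hfun]
  refine ((hasStrictFDerivAt_norm_sq x).hasFDerivAt.const_smul (2⁻¹ : ℝ)).congr_fderiv ?_
  ext v
  simp

variable [CompleteSpace F]

lemma gradient_half_sq_norm (x : F) : gradient (fun y : F => ‖y‖ ^ 2 / 2) x = x :=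
  (hasGradientAt_iff_hasFDerivAt.2 (hasFDerivAt_half_sq_norm x)).gradient

lemma gradient_fun_add {f g : F → ℝ} {x : F} (hf : DifferentiableAt ℝ f x)
    (hg : DifferentiableAt ℝ g x) :
    gradient (fun y => f y + g y) x = gradient f x + gradient g x := by
  simp [gradient, fderiv_fun_add hf hg]

lemma gradient_fun_sub {f g : F → ℝ} {x : F} (hf : DifferentiableAt ℝ f x)
    (hg : DifferentiableAt ℝ g x) :
    gradient (fun y => f y - g y) x = gradient f x - gradient g x := by
  simp [gradient, fderiv_fun_sub hf hg]

lemma lipschitzWith_gradient_of_enorm_le {f : F → ℝ} (hf : ContDiff ℝ 2 f) {a : ℝ≥0}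
    (h : ∀ x, ‖iteratedFDeriv ℝ 2 f x‖ₑ ≤ a) : LipschitzWith a (gradient f) := by
  have hfderiv : LipschitzWith a (fderiv ℝ f) :=
    lipschitzWith_of_nnnorm_fderiv_le ((hf.fderiv_right (m := 1) le_rfl).differentiable one_ne_zero)
      fun x => by simpa [← NNReal.coe_le_coe, ← norm_iteratedFDeriv_fderiv (n := 1)] using h x
  have h := (InnerProductSpace.toDual ℝ F).symm.lipschitz.comp hfderiv
  rw [one_mul] at h
  exact h

lemma gradient_eq_gradient_sub_half_sq_norm_add {φ : F → ℝ} (hφ : Differentiable ℝ φ) (x : F) :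
    gradient φ x = gradient (fun y => φ y - ‖y‖ ^ 2 / 2) x + x := by
  have hsq : Differentiable ℝ (fun y : F => ‖y‖ ^ 2 / 2) := fun y =>
    (hasFDerivAt_half_sq_norm y).differentiableAt
  conv_lhs => rw [show φ = fun y => (φ y - ‖y‖ ^ 2 / 2) + ‖y‖ ^ 2 / 2 by simp]
  rw [gradient_fun_add (f := fun y => φ y - ‖y‖ ^ 2 / 2) ((hφ x).sub (hsq x)) (hsq x),
    gradient_half_sq_norm]

end Calculus

section Hessian

variable {d : ℕ}

lemma isHermitian_hess {f : Ed d → ℝ} {x : Ed d} (hf : ContDiffAt ℝ 2 f x) :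
    (hess f x).IsHermitian := by
  ext i j
  simp [hess, iteratedFDeriv_two_apply,
    (hf.isSymmSndFDerivAt (by simp)) (EuclideanSpace.single i 1)]

lemma hess_add {f g : Ed d → ℝ} {x : Ed d} (hf : ContDiffAt ℝ 2 f x) (hg : ContDiffAt ℝ 2 g x) :
    hess (fun y => f y + g y) x = hess f x + hess g x := by
  ext i j
  simp [hess, fun_iteratedFDeriv_add_apply hf hg]

lemma hess_half_sq_norm (x : Ed d) : hess (fun y : Ed d => ‖y‖ ^ 2 / 2) x = 1 := by
  have h : fderiv ℝ (fderiv ℝ (fun y : Ed d => ‖y‖ ^ 2 / 2)) x = innerSL ℝ := by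
    rw [show fderiv ℝ (fun y : Ed d => ‖y‖ ^ 2 / 2) = innerSL ℝ from
      funext fun y => (hasFDerivAt_half_sq_norm y).fderiv]
    exact (innerSL ℝ).fderiv
  ext i j
  simp only [hess, iteratedFDeriv_two_apply, h, Matrix.cons_val_zero, Matrix.cons_val_one]
  change ⟪EuclideanSpace.single i (1 : ℝ), EuclideanSpace.single j 1⟫ = _
  simp [EuclideanSpace.inner_single_left, Matrix.one_apply]

lemma hess_eq_hess_sub_half_sq_norm_add_one {φ : Ed d → ℝ} (hφ : ContDiff ℝ 2 φ) (x : Ed d) :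
    hess φ x = hess (fun y => φ y - ‖y‖ ^ 2 / 2) x + 1 := by
  have hsq : ContDiff ℝ 2 (fun y : Ed d => ‖y‖ ^ 2 / 2) := (contDiff_norm_sq ℝ).div_const 2
  conv_lhs => rw [show φ = fun y => (φ y - ‖y‖ ^ 2 / 2) + ‖y‖ ^ 2 / 2 by simp]
  rw [hess_add (f := fun y => φ y - ‖y‖ ^ 2 / 2) (hφ.sub hsq).contDiffAt hsq.contDiffAt,
    hess_half_sq_norm]

end Hessian

lemma Matrix.IsHermitian.pow_card_le_det {n : Type*} [Fintype n] [DecidableEq n]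
    {M : Matrix n n ℝ} (hM : M.IsHermitian) {c : ℝ} (hc : 0 ≤ c)
    (h : ∀ v : EuclideanSpace ℝ n, c * ‖v‖ ^ 2 ≤ v.ofLp ⬝ᵥ M.mulVec v.ofLp) :
    c ^ Fintype.card n ≤ M.det := by
  have heig (i : n) : c ≤ hM.eigenvalues i := by
    have hv := h (hM.eigenvectorBasis i)
    rw [hM.eigenvectorBasis.orthonormal.1 i, one_pow, mul_one] at hv
    simpa [hM.eigenvalues_eq] using hv
  calc c ^ Fintype.card n = ∏ _i : n, c := by rw [Finset.prod_const, Finset.card_univ]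
    _ ≤ ∏ i, hM.eigenvalues i := Finset.prod_le_prod (fun _ _ => hc) fun i _ => heig i
    _ = M.det := by simp [hM.det_eq_prod_eigenvalues]

section MongeAmpere

variable {d : ℕ} {β : ℝ}

lemma pow_le_det_hess {φ : Ed d → ℝ} (hφ : ContDiff ℝ 2 φ) {c : ℝ} (hc : 0 ≤ c)
    (hLB : hessLB φ c) (x : Ed d) : c ^ d ≤ (hess φ x).det := by
  simpa using (isHermitian_hess hφ.contDiffAt).pow_card_le_det hc fun v => by
    simpa [dotProduct, Matrix.mulVec, Finset.mul_sum, mul_assoc, mul_left_comm] using hLB x v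

lemma enorm_iteratedFDeriv_le_of_holderNorm_le (hβ₀ : 0 < β) (hβ₁ : β < 1) {f : Ed d → ℝ}
    {j k : ℕ} (hjk : j ≤ k) {A : ℝ≥0∞} (hf : holderNorm (k + β) f ≤ A) (x : Ed d) :
    ‖iteratedFDeriv ℝ j f x‖ₑ ≤ A :=
  (enorm_le_supENorm _ x).trans ((supENorm_iteratedFDeriv_le_holderNorm hβ₀ hβ₁ hjk f).trans hf)

variable {φ : Ed d → ℝ} {a : ℝ≥0}

lemma supHolderNorm_hess_apply_le_of_holderNorm_le (hβ₀ : 0 < β) (hβ₁ : β < 1)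
    (hφ : ContDiff ℝ 4 φ) (hψ : holderNorm (4 + β) (fun x => φ x - ‖x‖ ^ 2 / 2) ≤ a)
    (i j : Fin d) : supHolderNorm β (fun x => hess φ x i j) ≤ 3 * a + 1 := by
  set ψ : Ed d → ℝ := fun x => φ x - ‖x‖ ^ 2 / 2
  have hψ' : holderNorm ((4 : ℕ) + β) ψ ≤ a := by exact_mod_cast hψ
  have hψC : ContDiff ℝ 4 ψ := hφ.sub ((contDiff_norm_sq ℝ).div_const 2)
  have hsecond : supHolderNorm β (iteratedFDeriv ℝ 2 ψ) ≤ 3 * a :=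
    supHolderNorm_le_of_lipschitzWith hβ₀.le hβ₁.le
      (enorm_iteratedFDeriv_le_of_holderNorm_le hβ₀ hβ₁ (by norm_num) hψ')
      (lipschitzWith_iteratedFDeriv_of_enorm_le hψC (by norm_num)
        (enorm_iteratedFDeriv_le_of_holderNorm_le hβ₀ hβ₁ (by norm_num) hψ'))
  simp_rw [hess_eq_hess_sub_half_sq_norm_add_one (hφ.of_le (by norm_num)), Matrix.add_apply]
  refine (supHolderNorm_add _ _).trans (add_le_add ((supHolderNorm_hess_apply_le ψ i j).trans
    hsecond) ((supHolderNorm_const_le _).trans ?_))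
  rcases eq_or_ne i j with rfl | hij <;> simp [*]

lemma lipschitzWith_gradient_of_holderNorm_le (hβ₀ : 0 < β) (hβ₁ : β < 1)
    (hφ : ContDiff ℝ 4 φ) (hψ : holderNorm (4 + β) (fun x => φ x - ‖x‖ ^ 2 / 2) ≤ a) :
    LipschitzWith (a + 1) (gradient φ) := by
  have hψ' : holderNorm ((4 : ℕ) + β) (fun x => φ x - ‖x‖ ^ 2 / 2) ≤ a := by exact_mod_cast hψ
  have hψC : ContDiff ℝ 2 (fun x => φ x - ‖x‖ ^ 2 / 2) :=
    (hφ.of_le (by norm_num)).sub ((contDiff_norm_sq ℝ).div_const 2)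
  rw [funext (gradient_eq_gradient_sub_half_sq_norm_add (hφ.differentiable (by norm_num)))]
  exact (lipschitzWith_gradient_of_enorm_le hψC
    (enorm_iteratedFDeriv_le_of_holderNorm_le hβ₀ hβ₁ (by norm_num) hψ')).add LipschitzWith.id

lemma supHolderNorm_frobInner_hess_le (hβ₀ : 0 < β) (hβ₁ : β < 1)
    {A : Ed d → Matrix (Fin d) (Fin d) ℝ} {I : ℝ≥0∞}
    (hA : ∀ i j, supHolderNorm β (fun x => A x i j) ≤ I) (u : Ed d → ℝ) :
    supHolderNorm β (fun x => frobInner (A x) (hess u x)) ≤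
      d * (d * (I * holderNorm (2 + β) u)) := by
  refine supHolderNorm_frobInner_le hA fun i j => (supHolderNorm_hess_apply_le u i j).trans ?_
  exact_mod_cast supHolderNorm_iteratedFDeriv_le_holderNorm hβ₀ hβ₁ 2 u

lemma supHolderNorm_inner_gradient_comp_le (hβ₀ : 0 < β) (hβ₁ : β < 1) {Φ : Ed d → Ed d}
    {L : ℝ≥0} (hL : 1 ≤ L) (hΦ : LipschitzWith L Φ) (u p : Ed d → ℝ) :
    supHolderNorm β (fun x => ⟪gradient u x, gradient p (Φ x)⟫) ≤
      d * (holderNorm (1 + β) u * (L * holderNorm (1 + β) p)) := by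
  have h1 (f : Ed d → ℝ) (i : Fin d) :
      supHolderNorm β (fun x => gradient f x i) ≤ holderNorm (1 + β) f := by
    refine (supHolderNorm_gradient_apply_le f i).trans ?_
    exact_mod_cast supHolderNorm_iteratedFDeriv_le_holderNorm hβ₀ hβ₁ 1 f
  simpa using supHolderNorm_inner_le (h1 u) fun i =>
    (supHolderNorm_comp_le (f := fun y => gradient p y i) hβ₀.le hβ₁.le hL hΦ).trans
      (mul_le_mul' le_rfl (h1 p i))

lemma ENNReal.mul_add_mul_le_add_mul_add (x y A B : ℝ≥0∞) : x * A + y * B ≤ (x + y) * (A + B) :=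
  calc x * A + y * B ≤ x * A + x * B + (y * A + y * B) := add_le_add le_self_add le_add_self
    _ = (x + y) * (A + B) := by ring

lemma supHolderNorm_det_mul_linearizedMA_le (hβ₀ : 0 < β) (hβ₁ : β < 1)
    {H : Ed d → Matrix (Fin d) (Fin d) ℝ} {K : ℝ≥0∞} (hK : 1 ≤ K)
    (hH : ∀ i j, supHolderNorm β (fun x => H x i j) ≤ K) {c : ℝ} (hc : 0 < c)
    (hdet : ∀ x, c ≤ (H x).det) {Φ : Ed d → Ed d} {L : ℝ≥0} (hL : 1 ≤ L)
    (hΦ : LipschitzWith L Φ) (u p : Ed d → ℝ) :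
    supHolderNorm β (fun x => (H x).det *
        (p (Φ x) * frobInner (H x)⁻¹ (hess u x) + ⟪gradient u x, gradient p (Φ x)⟫)) ≤
      detBound d K * L * (d * (d * invBound d K c) + d) *
        (holderNorm (2 + β) u * supHolderNorm β p +
          holderNorm (1 + β) u * holderNorm (1 + β) p) := by
  have hInv i j : supHolderNorm β (fun x => (H x)⁻¹ i j) ≤ invBound d K c := by
    simpa only [Fintype.card_fin] using supHolderNorm_inv_apply_le hK hH hc hdet i j
  have hDet : supHolderNorm β (fun x => (H x).det) ≤ detBound d K := by
    simpa only [Fintype.card_fin] using supHolderNorm_det_le hH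
  have hA := (supHolderNorm_mul (β := β) (fun x => p (Φ x)) _).trans
    (mul_le_mul' (supHolderNorm_comp_le hβ₀.le hβ₁.le hL hΦ)
      (supHolderNorm_frobInner_hess_le hβ₀ hβ₁ hInv u))
  have hB := supHolderNorm_inner_gradient_comp_le hβ₀ hβ₁ hL hΦ u p
  calc _ ≤ detBound d K * (L * supHolderNorm β p * (d * (d * (invBound d K c *
          holderNorm (2 + β) u))) + d * (holderNorm (1 + β) u * (L * holderNorm (1 + β) p))) :=
        (supHolderNorm_mul _ _).trans
          (mul_le_mul' hDet ((supHolderNorm_add _ _).trans (add_le_add hA hB)))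
    _ = detBound d K * L * (d * (d * invBound d K c) * (holderNorm (2 + β) u * supHolderNorm β p) +
        d * (holderNorm (1 + β) u * holderNorm (1 + β) p)) := by ring
    _ ≤ _ := (mul_le_mul' le_rfl (ENNReal.mul_add_mul_le_add_mul_add _ _ _ _)).trans_eq
        (mul_assoc _ _ _).symm

end MongeAmpere

theorem comparison_of_linearized_MA_operators_general
    (d : ℕ) (β : ℝ) (hβ0 : 0 < β) (hβ1 : β < 1)
    (lam : ℝ) (hlam : 1 ≤ lam) :
    ∃ C : ℝ, 0 < C ∧
      ∀ (q qhat : Ed d → ℝ) (φ₀ : Ed d → ℝ) (u : Ed d → ℝ),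
        ZdPeriodic q → ZdPeriodic qhat →
        ContDiff ℝ 2 q → ContDiff ℝ 2 qhat →
        holderNorm (2 + β) q ≤ ENNReal.ofReal lam →
        holderNorm (2 + β) qhat ≤ ENNReal.ofReal lam →
        (∀ x, 0 < q x) → (∀ x, 0 < qhat x) →
        ConvexOn ℝ Set.univ φ₀ →
        ZdPeriodic (fun x => φ₀ x - ‖x‖ ^ 2 / 2) →
        ContDiff ℝ 4 φ₀ →
        holderNorm (4 + β) (fun x => φ₀ x - ‖x‖ ^ 2 / 2) ≤ ENNReal.ofReal lam →
        hessLB φ₀ lam⁻¹ →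
        ContDiff ℝ 2 u → ZdPeriodic u → (∫ x in unitCube d, u x) = 0 →
        holderNorm (2 + β) u ≠ ⊤ →
        holderNorm β (fun x =>
            (hess φ₀ x).det *
              ((qhat (gradient φ₀ x) - q (gradient φ₀ x)) *
                  frobInner ((hess φ₀ x)⁻¹) (hess u x) +
                ⟪gradient u x,
                  gradient qhat (gradient φ₀ x) - gradient q (gradient φ₀ x)⟫)) ≤
          ENNReal.ofReal C *
            (holderNorm (2 + β) u * holderNorm β (fun x => qhat x - q x) +
              holderNorm (1 + β) u * holderNorm (1 + β) (fun x => qhat x - q x)) := by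
  set a : ℝ≥0 := lam.toNNReal
  set C : ℝ≥0∞ :=
    detBound d (3 * a + 1) * (a + 1) * (d * (d * invBound d (3 * a + 1) (lam⁻¹ ^ d)) + d)
  have hC : C ≠ ⊤ := by simp only [C, detBound, invBound]; finiteness
  refine ⟨C.toReal + 1, by positivity,
    fun q qhat φ₀ u _ _ hq hqhat _ _ _ _ _ _ hφ hψ hLB _ _ _ _ => ?_⟩
  have hgrad x : gradient qhat (gradient φ₀ x) - gradient q (gradient φ₀ x) =
      gradient (fun y => qhat y - q y) (gradient φ₀ x) :=
    (gradient_fun_sub (hqhat.differentiable (by norm_num) _)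
      (hq.differentiable (by norm_num) _)).symm
  simp_rw [hgrad, holderNorm_eq_supHolderNorm hβ0 hβ1]
  refine (supHolderNorm_det_mul_linearizedMA_le hβ0 hβ1 le_add_self
    (supHolderNorm_hess_apply_le_of_holderNorm_le hβ0 hβ1 hφ hψ) (by positivity)
    (pow_le_det_hess (hφ.of_le (by norm_num)) (by positivity) hLB) le_add_self
    (lipschitzWith_gradient_of_holderNorm_le hβ0 hβ1 hφ hψ) u (fun y => qhat y - q y)).trans ?_
  gcongr
  exact (ENNReal.ofReal_toReal hC).ge.trans (ENNReal.ofReal_le_ofReal (by linarith))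

/-- **Comparison of the linearized Monge–Ampère operators `Ψ̂'_{φ₀}` and `Ψ'_{φ₀}`**. -/
theorem comparison_of_linearized_MA_operators
    (d : ℕ) (hd : 1 ≤ d) (β : ℝ) (hβ0 : 0 < β) (hβ1 : β < 1)
    (lam : ℝ) (hlam : 1 ≤ lam) :
    ∃ C : ℝ, 0 < C ∧
      ∀ (q qhat : Ed d → ℝ) (φ₀ : Ed d → ℝ) (u : Ed d → ℝ),
        ZdPeriodic q → ZdPeriodic qhat →
        ContDiff ℝ 2 q → ContDiff ℝ 2 qhat →
        holderNorm (2 + β) q ≤ ENNReal.ofReal lam →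
        holderNorm (2 + β) qhat ≤ ENNReal.ofReal lam →
        (∀ x, 0 < q x) → (∀ x, 0 < qhat x) →
        ConvexOn ℝ Set.univ φ₀ →
        ZdPeriodic (fun x => φ₀ x - ‖x‖ ^ 2 / 2) →
        ContDiff ℝ 4 φ₀ →
        holderNorm (4 + β) (fun x => φ₀ x - ‖x‖ ^ 2 / 2) ≤ ENNReal.ofReal lam →
        hessLB φ₀ lam⁻¹ →
        ContDiff ℝ 2 u → ZdPeriodic u → (∫ x in unitCube d, u x) = 0 →
        holderNorm (2 + β) u ≠ ⊤ →
        holderNorm β (fun x =>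
            (hess φ₀ x).det *
              ((qhat (gradient φ₀ x) - q (gradient φ₀ x)) *
                  frobInner ((hess φ₀ x)⁻¹) (hess u x) +
                ⟪gradient u x,
                  gradient qhat (gradient φ₀ x) - gradient q (gradient φ₀ x)⟫)) ≤
          ENNReal.ofReal C *
            (holderNorm (2 + β) u * holderNorm β (fun x => qhat x - q x) +
              holderNorm (1 + β) u * holderNorm (1 + β) (fun x => qhat x - q x)) :=
  comparison_of_linearized_MA_operators_general d β hβ0 hβ1 lam hlam
end
end

section
/- Pointwise bound for ball integrals of torus Riesz kernels (Lemma, 'simple_ball_integral'): let d ≥ 2 and t ∈ (1, d). Then there exists a constant C = C(t, d) > 0 such that for every ε ∈ (0, 1/2) and every x ∈ ℝ^d: ∫_{[0,1)^d} 1{‖y‖_𝕋 ≤ ε} · ‖y − x‖_𝕋^{t−d} dy ≤ C · ( max(ε, ‖x‖_𝕋) )^t. -/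
/-!
Polar coordinates give `∫_{B(p,r)} ‖y - p‖^(t-d) dy = (d/t) ω r^t` with `ω = |B(0,1)|`, and since
the kernel is radially decreasing, any set `S` with `|S| ≤ |B(0,r)|` satisfies
`∫_S ‖y - p‖^(t-d) dy ≤ (d/t + 1) ω r^t`.
For `y` in the cube, `‖y - x‖_𝕋` is the Euclidean distance from `y` to one of `(2d+3)^d` integer
translates of `x` (those near the representative of `x` in the cube), so the integrand is
dominated by a finite sum of Euclidean kernels. The set `{‖y‖_𝕋 ≤ ε} ∩ [0,1)^d` lies in the
union of the `2^d` balls of radius `ε` around the vertices of the cube, so its volume is at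
most that of a ball of radius `2ε`. Hence the integral is `O(ε^t)`, which is
`O(max(ε, ‖x‖_𝕋)^t)`.
-/

open MeasureTheory Real
open scoped ENNReal NNReal

noncomputable section

/-- The torus quotient norm `‖x‖_𝕋 = inf { ‖x + k‖ : k ∈ ℤ^d }`. -/
def tnorm {d : ℕ} (x : Ed d) : ℝ := ⨅ k : Fin d → ℤ, ‖x + intVec k‖

/-- The half-open unit cube `[0,1)^d`. -/
def cube01 (d : ℕ) : Set (Ed d) := {x | ∀ i, x i ∈ Set.Ico (0 : ℝ) 1}

open Metric Set Module

section RieszKernel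

variable {E : Type*} [NormedAddCommGroup E] [NormedSpace ℝ E] [FiniteDimensional ℝ E]
  [MeasurableSpace E] [BorelSpace E] (μ : Measure E) [μ.IsAddHaarMeasure]

theorem setIntegral_ball_norm_rpow [Nontrivial E] {s r : ℝ} (hs : 0 < s) (hr : 0 ≤ r) :
    ∫ x in ball (0 : E) r, ‖x‖ ^ (s - finrank ℝ E) ∂μ =
      finrank ℝ E / s * μ.real (ball 0 1) * r ^ s := by
  set n := finrank ℝ E
  have hradial : ∫ x in ball (0 : E) r, ‖x‖ ^ (s - n) ∂μ =
      ∫ x, (Iio r).indicator (fun u => u ^ (s - n)) ‖x‖ ∂μ := by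
    rw [← integral_indicator measurableSet_ball]
    congr 1 with x
    simp [indicator]
  have hpolar : ∫ y in Ioi (0 : ℝ), y ^ (n - 1) • (Iio r).indicator (fun u => u ^ (s - n)) y =
      ∫ y in (0)..r, y ^ (s - 1) := by
    rw [intervalIntegral.integral_of_le hr, integral_Ioc_eq_integral_Ioo, ← Ioi_inter_Iio,
      ← setIntegral_indicator measurableSet_Iio]
    refine setIntegral_congr_fun measurableSet_Ioi fun y (hy : 0 < y) => ?_
    by_cases hyr : y < r
    · have hn : 1 ≤ n := Module.finrank_pos
      simp only [indicator_of_mem (show y ∈ Iio r from hyr), smul_eq_mul]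
      rw [← rpow_natCast, ← rpow_add hy]
      push_cast [hn]
      ring_nf
    · simp [hyr]
  rw [hradial, integral_fun_norm_addHaar, hpolar, integral_rpow (by left; linarith)]
  simp [zero_rpow hs.ne']
  ring

theorem setLIntegral_ball_norm_sub_rpow [Nontrivial E] {s r : ℝ} (hs : 0 < s) (hr : 0 ≤ r)
    (p : E) :
    ∫⁻ y in ball p r, ENNReal.ofReal (‖y - p‖ ^ (s - finrank ℝ E)) ∂μ =
      ENNReal.ofReal (finrank ℝ E / s * μ.real (ball 0 1) * r ^ s) := by
  have hball : (· - p) ⁻¹' ball (0 : E) r = ball p r := by ext y; simp [dist_eq_norm]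
  have hint : IntegrableOn (fun x : E => ‖x‖ ^ (s - finrank ℝ E)) (ball 0 r) μ := by
    refine integrableOn_ball_of_norm_le_rpow (C := 1) (α := finrank ℝ E - s) finrank_pos
      (by linarith) (ae_of_all _ fun x => ?_)
      (measurable_norm.pow_const _).aestronglyMeasurable
    rw [norm_of_nonneg (by positivity), one_mul, neg_sub]
  rw [← hball, (measurePreserving_sub_right μ p).setLIntegral_comp_preimage_emb
    (measurableEmbedding_subRight p) (fun x => ENNReal.ofReal (‖x‖ ^ (s - finrank ℝ E))),
    ← setIntegral_ball_norm_rpow μ hs hr,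
    ofReal_integral_eq_lintegral_ofReal hint (ae_of_all _ fun x => by positivity)]

theorem setLIntegral_norm_sub_rpow_le {s r : ℝ} (hs : 0 < s) (hsn : s ≤ finrank ℝ E)
    (hr : 0 < r) (p : E) {S : Set E} (hS : μ S ≤ μ (closedBall 0 r)) :
    ∫⁻ y in S, ENNReal.ofReal (‖y - p‖ ^ (s - finrank ℝ E)) ∂μ ≤
      ENNReal.ofReal ((finrank ℝ E / s + 1) * μ.real (ball 0 1) * r ^ s) := by
  set n := finrank ℝ E
  have : Nontrivial E := nontrivial_of_finrank_pos (R := ℝ) (by exact_mod_cast hs.trans_le hsn)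
  have houter : ∀ y ∈ S \ ball p r,
      ENNReal.ofReal (‖y - p‖ ^ (s - n)) ≤ ENNReal.ofReal (r ^ (s - n)) := fun y hy =>
    ENNReal.ofReal_le_ofReal <| rpow_le_rpow_of_nonpos hr
      (by simpa [dist_eq_norm] using hy.2) (by linarith)
  have hscale : r ^ (s - n) * r ^ n = r ^ s := by
    rw [rpow_sub_natCast hr.ne', div_mul_cancel₀ _ (by positivity)]
  rw [Measure.addHaar_closedBall μ _ hr.le] at hS
  calc ∫⁻ y in S, ENNReal.ofReal (‖y - p‖ ^ (s - n)) ∂μ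
      ≤ ∫⁻ y in ball p r ∪ S \ ball p r, ENNReal.ofReal (‖y - p‖ ^ (s - n)) ∂μ :=
        lintegral_mono_set (subset_union_right.trans union_sdiff_self.superset)
    _ ≤ ∫⁻ y in ball p r, ENNReal.ofReal (‖y - p‖ ^ (s - n)) ∂μ +
        ∫⁻ y in S \ ball p r, ENNReal.ofReal (‖y - p‖ ^ (s - n)) ∂μ := lintegral_union_le _ _ _
    _ ≤ ENNReal.ofReal (n / s * μ.real (ball 0 1) * r ^ s) +
        ENNReal.ofReal (r ^ (s - n)) * (ENNReal.ofReal (r ^ n) * μ (ball 0 1)) := by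
      rw [setLIntegral_ball_norm_sub_rpow μ hs hr.le]
      grw [setLIntegral_mono measurable_const houter, setLIntegral_const, sdiff_subset, hS]
    _ = ENNReal.ofReal ((n / s + 1) * μ.real (ball 0 1) * r ^ s) := by
      rw [← ofReal_measureReal, ← mul_assoc, ← ENNReal.ofReal_mul (by positivity), hscale,
        ← ENNReal.ofReal_mul (by positivity), ← ENNReal.ofReal_add (by positivity) (by positivity)]
      ring_nf

end RieszKernel

lemma norm_sq_le_card_of_abs_le_one {ι : Type*} [Fintype ι] (z : EuclideanSpace ℝ ι)
    (hz : ∀ i, |z i| ≤ 1) : ‖z‖ ^ 2 ≤ Fintype.card ι := by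
  rw [EuclideanSpace.norm_sq_eq]
  calc ∑ i, ‖z i‖ ^ 2 ≤ ∑ _i : ι, (1 : ℝ) :=
        Finset.sum_le_sum fun i _ => by rw [norm_eq_abs]; exact pow_le_one₀ (abs_nonneg _) (hz i)
    _ = Fintype.card ι := by simp

section Torus

variable {d : ℕ}

@[simp]
lemma intVec_apply (k : Fin d → ℤ) (i : Fin d) : intVec k i = k i := rfl

lemma intVec_add (j k : Fin d → ℤ) : intVec (j + k) = intVec j + intVec k := by
  ext i; simp

lemma tnorm_le_norm_add_intVec (z : Ed d) (k : Fin d → ℤ) : tnorm z ≤ ‖z + intVec k‖ :=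
  ciInf_le ⟨0, by rintro _ ⟨k, rfl⟩; exact norm_nonneg _⟩ k

lemma tnorm_add_intVec (z : Ed d) (j : Fin d → ℤ) : tnorm (z + intVec j) = tnorm z := by
  simp only [tnorm, add_assoc, ← intVec_add]
  exact (Equiv.addLeft j).iInf_comp (g := fun k => ‖z + intVec k‖)

lemma measurable_tnorm : Measurable (tnorm : Ed d → ℝ) :=
  Measurable.iInf fun _ => (measurable_id.add_const _).norm

lemma zero_mem_Icc_neg_natCast (m : ℕ) : (0 : Fin d → ℤ) ∈ Finset.Icc (-(m : Fin d → ℤ)) m :=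
  Finset.mem_Icc.2 ⟨neg_nonpos.2 m.cast_nonneg, m.cast_nonneg⟩

lemma exists_mem_Icc_tnorm_eq (z : Ed d) {m : ℕ} (hz : 2 * ‖z‖ ≤ m) :
    ∃ k ∈ Finset.Icc (-(m : Fin d → ℤ)) m, tnorm z = ‖z + intVec k‖ := by
  have h0 := zero_mem_Icc_neg_natCast (d := d) m
  obtain ⟨k, hk, hmin⟩ := (Finset.Icc _ _).exists_min_image (fun k => ‖z + intVec k‖) ⟨0, h0⟩
  refine ⟨k, hk, le_antisymm (tnorm_le_norm_add_intVec z k) (le_ciInf fun j => ?_)⟩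
  by_cases hj : j ∈ Finset.Icc (-(m : Fin d → ℤ)) m
  · exact hmin j hj
  obtain ⟨i, hi⟩ : ∃ i, (m : ℤ) < |j i| := by
    by_contra! h
    exact hj (by simpa [Finset.mem_Icc, Pi.le_def, abs_le, forall_and] using h)
  have hji : (m : ℝ) + 1 ≤ |(j i : ℝ)| := by exact_mod_cast hi
  have hzi : |z i| ≤ ‖z‖ := by simpa using PiLp.norm_apply_le z i
  have hzji : |z i + j i| ≤ ‖z + intVec j‖ := by simpa using PiLp.norm_apply_le (z + intVec j) i
  calc ‖z + intVec k‖ ≤ ‖z + intVec 0‖ := hmin 0 h0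
    _ = ‖z‖ := by simp [show intVec (0 : Fin d → ℤ) = 0 by ext; simp]
    _ ≤ ‖z + intVec j‖ := by linarith [abs_add' (j i : ℝ) (z i)]

lemma two_mul_norm_sub_le_of_mem_cube01 {x y : Ed d} (hx : x ∈ cube01 d) (hy : y ∈ cube01 d) :
    2 * ‖y - x‖ ≤ (d + 1 : ℕ) := by
  have hcoord : ∀ i, |(y - x) i| ≤ 1 := fun i => by
    rw [PiLp.sub_apply, abs_le]
    constructor <;> linarith [(hx i).1, (hx i).2, (hy i).1, (hy i).2]
  have := norm_sq_le_card_of_abs_le_one _ hcoord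
  rw [Fintype.card_fin] at this
  push_cast
  nlinarith [sq_nonneg (‖y - x‖ - 1)]

lemma volume_tnorm_le_inter_cube01_le {ε : ℝ} (hε : 0 ≤ ε) (hε1 : ε < 1) :
    volume ({y : Ed d | tnorm y ≤ ε} ∩ cube01 d) ≤ volume (closedBall (0 : Ed d) (2 * ε)) := by
  have hcover : {y : Ed d | tnorm y ≤ ε} ∩ cube01 d ⊆
      ⋃ k ∈ Finset.Icc (-1 : Fin d → ℤ) 0, closedBall (-intVec k) ε := by
    rintro y ⟨hyε, hy⟩
    obtain ⟨k, -, hk⟩ := exists_mem_Icc_tnorm_eq y (m := d + 1)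
      (by simpa using two_mul_norm_sub_le_of_mem_cube01 (x := 0) (by simp [cube01]) hy)
    have hki : ∀ i, |y i + k i| ≤ ε := fun i =>
      (show |y i + k i| ≤ ‖y + intVec k‖ by simpa using PiLp.norm_apply_le (y + intVec k) i).trans
        (hk ▸ hyε)
    refine mem_biUnion (x := k) ?_ ?_
    · have hk_range : ∀ i, -1 ≤ k i ∧ k i ≤ 0 := fun i => by
        obtain ⟨hlow, hup⟩ := abs_le.1 (hki i)
        have : (-2 : ℤ) < k i := by exact_mod_cast (by linarith [(hy i).2] : (-2 : ℝ) < k i)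
        have : k i < 1 := by exact_mod_cast (by linarith [(hy i).1] : (k i : ℝ) < 1)
        omega
      simpa [Pi.le_def, forall_and] using hk_range
    · rw [mem_closedBall, dist_eq_norm, sub_neg_eq_add, ← hk]
      exact hyε
  calc volume ({y : Ed d | tnorm y ≤ ε} ∩ cube01 d)
      ≤ ∑ k ∈ Finset.Icc (-1 : Fin d → ℤ) 0, volume (closedBall (-intVec k) ε) :=
        (measure_mono hcover).trans (measure_biUnion_finset_le _ _)
    _ = volume (closedBall (0 : Ed d) (2 * ε)) := by
      have h2ε : 0 ≤ 2 * ε := by positivity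
      simp [Measure.addHaar_closedBall _ _ hε, Measure.addHaar_closedBall _ _ h2ε, Pi.card_Icc,
        mul_pow, ENNReal.ofReal_mul, ← mul_assoc]

lemma exists_tnorm_sub_eq_norm_sub (x : Ed d) {y : Ed d} (hy : y ∈ cube01 d) :
    ∃ k ∈ Finset.Icc (-((d + 1 : ℕ) : Fin d → ℤ)) (d + 1 : ℕ),
      tnorm (y - x) = ‖y - (x - intVec ((fun i => ⌊x i⌋) + k))‖ := by
  set j : Fin d → ℤ := fun i => ⌊x i⌋
  have hfract : x - intVec j ∈ cube01 d := fun i => by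
    have : (x - intVec j) i = Int.fract (x i) := by simp [j, Int.self_sub_floor]
    exact this ▸ ⟨Int.fract_nonneg _, Int.fract_lt_one _⟩
  obtain ⟨k, hk, hnorm⟩ :=
    exists_mem_Icc_tnorm_eq _ (two_mul_norm_sub_le_of_mem_cube01 hfract hy)
  refine ⟨k, hk, ?_⟩
  rw [← tnorm_add_intVec (y - x) j, intVec_add, show y - x + intVec j = y - (x - intVec j) by abel,
    hnorm]
  congr 1
  abel

lemma setLIntegral_tnorm_sub_rpow_le_sum (x : Ed d) {S : Set (Ed d)} (hS : S ⊆ cube01 d) (s : ℝ) :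
    ∫⁻ y in S, ENNReal.ofReal (tnorm (y - x) ^ s) ≤
      ∑ k ∈ Finset.Icc (-((d + 1 : ℕ) : Fin d → ℤ)) (d + 1 : ℕ),
        ∫⁻ y in S, ENNReal.ofReal (‖y - (x - intVec ((fun i => ⌊x i⌋) + k))‖ ^ s) := by
  rw [← lintegral_finsetSum _ fun k _ => by fun_prop]
  refine setLIntegral_mono (by fun_prop) fun y hy => ?_
  obtain ⟨k, hk, heq⟩ := exists_tnorm_sub_eq_norm_sub x (hS hy)
  rw [heq]
  exact Finset.single_le_sum
    (f := fun k => ENNReal.ofReal (‖y - (x - intVec ((fun i => ⌊x i⌋) + k))‖ ^ s))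
    (fun _ _ => zero_le) hk

end Torus

theorem simple_ball_integral_general
    (d : ℕ) (t : ℝ) (ht1 : 1 < t) (htd : t < d) :
    ∃ C : ℝ, 0 < C ∧
      ∀ (ε : ℝ), 0 < ε → ε < 1/2 →
        ∀ x : Ed d,
          (∫⁻ y in cube01 d,
              Set.indicator {y : Ed d | tnorm y ≤ ε}
                (fun y => ENNReal.ofReal (tnorm (y - x) ^ (t - d))) y) ≤
            ENNReal.ofReal (C * max ε (tnorm x) ^ t) := by
  set F : Finset (Fin d → ℤ) := Finset.Icc (-((d + 1 : ℕ) : Fin d → ℤ)) (d + 1 : ℕ)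
  set K : ℝ := (d / t + 1) * volume.real (ball (0 : Ed d) 1)
  have hF : 0 < F.card := Finset.card_pos.2 ⟨0, zero_mem_Icc_neg_natCast _⟩
  have hK : 0 < K := by
    have := ENNReal.toReal_pos (measure_ball_pos volume (0 : Ed d) one_pos).ne'
      measure_ball_lt_top.ne
    positivity
  refine ⟨F.card * K * 2 ^ t, by positivity, fun ε hε hε2 x => ?_⟩
  have hA : MeasurableSet {y : Ed d | tnorm y ≤ ε} :=
    measurableSet_le measurable_tnorm measurable_const
  have hS := volume_tnorm_le_inter_cube01_le (d := d) hε.le (by linarith)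
  calc ∫⁻ y in cube01 d, {y : Ed d | tnorm y ≤ ε}.indicator
          (fun y => ENNReal.ofReal (tnorm (y - x) ^ (t - d))) y
      = ∫⁻ y in {y | tnorm y ≤ ε} ∩ cube01 d, ENNReal.ofReal (tnorm (y - x) ^ (t - d)) := by
        rw [lintegral_indicator hA, Measure.restrict_restrict hA]
    _ ≤ ∑ _k ∈ F, ENNReal.ofReal (K * (2 * ε) ^ t) :=
        (setLIntegral_tnorm_sub_rpow_le_sum x inter_subset_right _).trans <|
          Finset.sum_le_sum fun k _ => by
            simpa using setLIntegral_norm_sub_rpow_le volume (by linarith) (by simpa using htd.le)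
              (by positivity) _ hS
    _ = ENNReal.ofReal (F.card * K * 2 ^ t * ε ^ t) := by
        rw [Finset.sum_const, nsmul_eq_mul, ← ENNReal.ofReal_natCast,
          ← ENNReal.ofReal_mul (by positivity), mul_rpow (by norm_num) hε.le]
        ring_nf
    _ ≤ ENNReal.ofReal (F.card * K * 2 ^ t * max ε (tnorm x) ^ t) := by
        gcongr
        exact le_max_left _ _

/-- **Pointwise bound for ball integrals of torus Riesz kernels** ('simple_ball_integral'). -/
theorem simple_ball_integral
    (d : ℕ) (hd : 2 ≤ d) (t : ℝ) (ht1 : 1 < t) (htd : t < d) :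
    ∃ C : ℝ, 0 < C ∧
      ∀ (ε : ℝ), 0 < ε → ε < 1/2 →
        ∀ x : Ed d,
          (∫⁻ y in cube01 d,
              Set.indicator {y : Ed d | tnorm y ≤ ε}
                (fun y => ENNReal.ofReal (tnorm (y - x) ^ (t - d))) y) ≤
            ENNReal.ofReal (C * max ε (tnorm x) ^ t) :=
  simple_ball_integral_general d t ht1 htd
end
end
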